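/- Let E be a linear functional on ℂ[u_1,ū_1,…] with E(1)=1 that annihilates, for every monomial u^p ū^q with Σ k p_k = n and Σ k q_k = n-1, the element (Σ_{j≥1} j p_j u_j^{-1}u_{j-1} u^p ū^q) + ((2Σ_j q_j - 2) ū_1 u^p ū^q) - (Σ_{j≥1}(j+2) q_j ū_j^{-1} ū_{j+1} u^p ū^q). Then for every p with Σ_k k·p_k = n, E(u^p ū_n) = 1/(n+1). -/
import Mathlib


open MvPolynomial

noncomputable section

/-- The polynomial algebra `ℂ[u_1, ū_1, u_2, ū_2, …]`. -/
abbrev UUbar := MvPolynomial (ℕ ⊕ ℕ) ℂ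

/-- `u_n`, with the convention `u_0 = 1`. -/
def uvar (n : ℕ) : UUbar := if n = 0 then 1 else X (Sum.inl n)

/-- `ū_n`, with the convention `ū_0 = 1`. -/
def ubar (n : ℕ) : UUbar := if n = 0 then 1 else X (Sum.inr n)

/-- The monomial `u^p = Π_k u_k^{p_k}`. -/
def monoU (p : ℕ →₀ ℕ) : UUbar := p.prod fun k e => (uvar k) ^ e

/-- The monomial `ū^q = Π_k ū_k^{q_k}`. -/
def monoL (q : ℕ →₀ ℕ) : UUbar := q.prod fun k e => (ubar k) ^ e

/-- The weighted degree `Σ k·p_k`. -/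
def wsum (p : ℕ →₀ ℕ) : ℕ := ∑ j ∈ p.support, j * p j

lemma wsum_def (p : ℕ →₀ ℕ) : wsum p = p.sum fun j e => j * e := rfl

lemma wsum_add (p q : ℕ →₀ ℕ) : wsum (p + q) = wsum p + wsum q := by
  simp only [wsum_def]
  exact Finsupp.sum_add_index' (by simp) (fun a b c => by ring)

lemma wsum_single (j e : ℕ) : wsum (Finsupp.single j e) = j * e := by
  simp only [wsum_def]
  exact Finsupp.sum_single_index (by simp)

lemma monoU_add (p q : ℕ →₀ ℕ) : monoU (p + q) = monoU p * monoU q := by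
  simp only [monoU]
  exact Finsupp.prod_add_index' (fun a => pow_zero _) (fun a b c => pow_add _ _ _)

lemma monoU_single (j e : ℕ) : monoU (Finsupp.single j e) = uvar j ^ e := by
  simp only [monoU]
  exact Finsupp.prod_single_index (pow_zero _)

lemma monoL_single (j e : ℕ) : monoL (Finsupp.single j e) = ubar j ^ e := by
  simp only [monoL]
  exact Finsupp.prod_single_index (pow_zero _)

lemma monoU_zero : monoU 0 = 1 := rfl
lemma ubar_zero : ubar 0 = 1 := by simp [ubar]
lemma monoL_zero : monoL 0 = 1 := rfl

lemma wsum_erase_zero (p : ℕ →₀ ℕ) : wsum (p.erase 0) = wsum p := by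
  conv_rhs => rw [← Finsupp.erase_add_single 0 p, wsum_add, wsum_single]
  simp

lemma monoU_erase_zero (p : ℕ →₀ ℕ) : monoU (p.erase 0) = monoU p := by
  conv_rhs => rw [← Finsupp.erase_add_single 0 p, monoU_add, monoU_single]
  simp [uvar]

lemma eq_zero_of_wsum (p : ℕ →₀ ℕ) (h0 : p 0 = 0) (h : wsum p = 0) : p = 0 := by
  ext j
  by_contra hj
  have hjs : j ∈ p.support := Finsupp.mem_support_iff.2 (by simpa using hj)
  have := (Finset.sum_eq_zero_iff.1 h) j hjs
  rcases Nat.eq_zero_or_pos j with rfl | hjp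
  · exact hj (by simpa using h0)
  · rcases Nat.mul_eq_zero.1 this with h | h
    · omega
    · exact hj (by simpa using h)

lemma sub_add_cancel_of_mem {p : ℕ →₀ ℕ} {j : ℕ} (h : 1 ≤ p j) :
    (p - Finsupp.single j 1) + Finsupp.single j 1 = p := by
  ext k
  simp only [Finsupp.add_apply, Finsupp.tsub_apply, Finsupp.single_apply]
  rcases eq_or_ne j k with rfl | hk
  · simp only [if_pos rfl, if_true]; omega
  · simp [hk]

/-- The element `L̄_{-1}(ρ₀ u^p ū^q)` of Lemma 6.4:
`Σ_j j p_j u_j⁻¹u_{j-1} u^p ū^q + (2Σ_j q_j - 2) ū_1 u^p ū^q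
  - Σ_j (j+2) q_j ū_j⁻¹ū_{j+1} u^p ū^q`. -/
def lbarElt (p q : ℕ →₀ ℕ) : UUbar :=
  (∑ j ∈ p.support, ((j : ℂ) * (p j : ℂ)) •
      (monoU (p - Finsupp.single j 1 + Finsupp.single (j - 1) 1) * monoL q))
    + (2 * (∑ j ∈ q.support, (q j : ℂ)) - 2) • (ubar 1 * monoU p * monoL q)
    - ∑ j ∈ q.support, (((j : ℂ) + 2) * (q j : ℂ)) •
        (monoU p * monoL (q - Finsupp.single j 1 + Finsupp.single (j + 1) 1))

/-- **(Corollary 6.10, abstract form.)**  Let `E` be a linear functional on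
`ℂ[u_1,ū_1,…]` with `E(1) = 1` annihilating, for every `n ≥ 1` and every pair of
monomials `u^p ū^q` with `Σ k p_k = n` and `Σ k q_k = n-1`, the element
`L̄_{-1}(ρ₀ u^p ū^q)`.  Then for every `p` with `Σ k p_k = n`,
`E(u^p ū_n) = 1/(n+1)`. -/
theorem moments_general (E : UUbar →ₗ[ℂ] ℂ)
    (hE1 : E 1 = 1)
    (hann : ∀ n : ℕ, 1 ≤ n → ∀ p q : ℕ →₀ ℕ, p 0 = 0 → q 0 = 0 →
      wsum p = n → wsum q = n - 1 → E (lbarElt p q) = 0) :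
    ∀ (n : ℕ) (p : ℕ →₀ ℕ), p 0 = 0 → wsum p = n →
      E (monoU p * ubar n) = 1 / ((n : ℂ) + 1) := by
  intro n
  induction n with
  | zero =>
    intro p hp0 hwp
    have hp : p = 0 := eq_zero_of_wsum p hp0 hwp
    subst hp
    simp [monoU_zero, ubar, hE1]
  | succ n ih =>
    intro p hp0 hwp
    have hsupp0 : (0 : ℕ) ∉ p.support := by
      simp [Finsupp.mem_support_iff, hp0]
    -- cast of wsum
    have hcast : ∑ j ∈ p.support, (j : ℂ) * (p j : ℂ) = ((n : ℂ) + 1) := by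
      have : ((wsum p : ℕ) : ℂ) = ((n + 1 : ℕ) : ℂ) := by rw [hwp]
      rw [wsum] at this
      push_cast at this
      exact this
    have hn1 : ((n : ℂ) + 1) ≠ 0 := Nat.cast_add_one_ne_zero n
    -- the first-sum evaluation
    have hfirst : ∀ j ∈ p.support,
        E (monoU (p - Finsupp.single j 1 + Finsupp.single (j - 1) 1) * ubar n)
          = 1 / ((n : ℂ) + 1) := by
      intro j hj
      have hj1 : 1 ≤ j := by
        rcases Nat.eq_zero_or_pos j with rfl | h
        · exact absurd hj hsupp0
        · exact h
      have hpj : 1 ≤ p j := Nat.one_le_iff_ne_zero.2 (Finsupp.mem_support_iff.1 hj)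
      set p' := p - Finsupp.single j 1 + Finsupp.single (j - 1) 1 with hp'
      have hwsub : wsum (p - Finsupp.single j 1) + j = wsum p := by
        conv_rhs => rw [← sub_add_cancel_of_mem hpj, wsum_add, wsum_single]
        ring
      have hw' : wsum p' = n := by
        rw [hp', wsum_add, wsum_single]
        omega
      have := ih (p'.erase 0) (by simp) (by rw [wsum_erase_zero]; exact hw')
      rwa [monoU_erase_zero] at this
    rcases Nat.eq_zero_or_pos n with rfl | hn
    · -- target degree 1, use q = 0
      have h := hann 1 le_rfl p 0 hp0 rfl hwp rfl
      rw [lbarElt] at h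
      simp only [Finsupp.support_zero, Finset.sum_empty, mul_zero, zero_sub, monoL_zero,
        mul_one, sub_zero, map_add, map_sum, map_smul, smul_eq_mul] at h
      have hsum : ∑ x ∈ p.support, (x : ℂ) * (p x : ℂ) *
          E (monoU (p - Finsupp.single x 1 + Finsupp.single (x - 1) 1)) = 1 := by
        calc ∑ x ∈ p.support, (x : ℂ) * (p x : ℂ) *
              E (monoU (p - Finsupp.single x 1 + Finsupp.single (x - 1) 1))
            = ∑ x ∈ p.support, (x : ℂ) * (p x : ℂ) * (1 / ((0 : ℂ) + 1)) := by
              refine Finset.sum_congr rfl fun j hj => ?_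
              have hf := hfirst j hj
              rw [ubar_zero, mul_one] at hf
              rw [hf]
              norm_num
          _ = 1 := by
              rw [← Finset.sum_mul, hcast]
              norm_num
      rw [hsum] at h
      have hE : E (ubar 1 * monoU p) = 1 / 2 := by linear_combination -h / 2
      rw [show ((0 : ℕ) + 1) = 1 from rfl, mul_comm (monoU p), hE]
      norm_num
    · -- target degree n+1 ≥ 2, use q = single n 1
      have hq0 : (Finsupp.single n 1 : ℕ →₀ ℕ) 0 = 0 := by
        rw [Finsupp.single_apply, if_neg (by omega)]
      have hwq : wsum (Finsupp.single n 1) = (n + 1) - 1 := by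
        rw [wsum_single]; omega
      have h := hann (n + 1) (by omega) p (Finsupp.single n 1) hp0 hq0 hwp hwq
      rw [lbarElt] at h
      simp only [Finsupp.support_single_ne_zero n one_ne_zero, Finset.sum_singleton,
        Finsupp.single_eq_same, Nat.cast_one, tsub_self, zero_add, monoL_single, pow_one,
        map_sub, map_add, map_sum, map_smul, smul_eq_mul] at h
      have hsum : ∑ x ∈ p.support, (x : ℂ) * (p x : ℂ) *
          E (monoU (p - Finsupp.single x 1 + Finsupp.single (x - 1) 1) * ubar n) = 1 := by
        calc ∑ x ∈ p.support, (x : ℂ) * (p x : ℂ) *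
              E (monoU (p - Finsupp.single x 1 + Finsupp.single (x - 1) 1) * ubar n)
            = ∑ x ∈ p.support, (x : ℂ) * (p x : ℂ) * (1 / ((n : ℂ) + 1)) := by
              refine Finset.sum_congr rfl fun j hj => ?_
              rw [hfirst j hj]
          _ = 1 := by
              rw [← Finset.sum_mul, hcast]
              field_simp
      rw [hsum] at h
      have hne : (n : ℂ) + 2 ≠ 0 := by
        have : ((n + 2 : ℕ) : ℂ) ≠ 0 := Nat.cast_ne_zero.2 (by omega)
        push_cast at this
        exact this
      have h2 : ((n : ℂ) + 2) * E (monoU p * ubar (n + 1)) = 1 := by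
        linear_combination -h
      have hval : E (monoU p * ubar (n + 1)) = 1 / ((n : ℂ) + 2) := by
        rw [eq_div_iff hne]
        linear_combination h2
      push_cast
      rw [hval]
      ring


end
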